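/- arXiv:math/0101262 — 2 statements merged into one kernel-verified Lean document; each statement's English description precedes it below -/
import Mathlib

section
/- Let B ≥ 2 be an integer and n ≥ 1. If h : Δ_n → ℝ is bounded, barycentrically B-almost convex, and satisfies h(e_k) ≤ 0 at every vertex e_k of Δ_n, then h(x_0,…,x_n) ≤ ∑_{k=0}^n H_B(x_k) for all (x_0,…,x_n) ∈ Δ_n. -/
open scoped BigOperators

/-- `H_B(x) = ∑_{k=0}^∞ {B^k x}/B^k` where `{y}` is the fractional part. -/
noncomputable def HB (B : ℕ) (x : ℝ) : ℝ :=
  ∑' k : ℕ, Int.fract ((B : ℝ) ^ k * x) / (B : ℝ) ^ k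

/-!
Write `Pₘ(x) = ∑ₖ {Bᵐ xₖ}`, so that `∑ₖ H_B(xₖ) = ∑ₘ Pₘ(x) / Bᵐ`, and `P₀(x) = 1` unless `x` is a
vertex. Every `x ∈ Δ` splits as `B x = y₀ + ⋯ + y_{B-1}` with `yᵢ ∈ Δ` and
`∑ᵢ {Bᵐ yᵢₖ} ≤ {Bᵐ⁺¹ xₖ}` for all `k` and `m`: peel points of `Δ` off `B x` one at a time, each
with base-`B` digits dominated by those of what is left, so that no carries occur. Applying almost
convexity to this splitting `N` times gives `h x ≤ ∑ₖ H_B(xₖ) + M P_N(x) / Bᴺ` for an upper bound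
`M ≥ 0` of `h`, and the error term vanishes as `N → ∞`.
-/

open Finset

lemma Int.fract_le_fract_of_natCast_le {x y : ℝ} {N : ℕ} (hNx : (N : ℝ) ≤ x) (hxy : x ≤ y)
    (hyN : y < N + 1) : Int.fract x ≤ Int.fract y := by
  have hx : ⌊x⌋ = N := Int.floor_eq_iff.2 ⟨mod_cast hNx, by push_cast; linarith⟩
  have hy : ⌊y⌋ = N := Int.floor_eq_iff.2 ⟨by push_cast; linarith, mod_cast hyN⟩
  rw [Int.fract, Int.fract, hx, hy]
  linarith

lemma Int.fract_sub_of_fract_le {x y : ℝ} (h : Int.fract x ≤ Int.fract y) :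
    Int.fract (y - x) = Int.fract y - Int.fract x :=
  Int.fract_eq_iff.2 ⟨sub_nonneg.2 h, by linarith [Int.fract_lt_one y, Int.fract_nonneg x],
    ⌊y⌋ - ⌊x⌋, by push_cast; rw [Int.fract, Int.fract]; ring⟩

section HB

variable {B : ℕ}

lemma summable_fract_pow_mul_div_pow (hB : 1 < B) (x : ℝ) :
    Summable fun k : ℕ => Int.fract ((B : ℝ) ^ k * x) / (B : ℝ) ^ k := by
  have hB' : (1 : ℝ) < B := mod_cast hB
  refine Summable.of_nonneg_of_le (fun k => by positivity) (fun k => ?_)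
    (summable_geometric_of_lt_one (by positivity) (inv_lt_one_of_one_lt₀ hB'))
  rw [inv_pow, div_eq_mul_inv]
  exact mul_le_of_le_one_left (by positivity) (Int.fract_lt_one _).le

lemma HB_nonneg (x : ℝ) : 0 ≤ HB B x :=
  tsum_nonneg fun k => div_nonneg (Int.fract_nonneg _) (by positivity)

lemma HB_eq_fract_add (hB : 1 < B) (x : ℝ) : HB B x = Int.fract x + HB B (B * x) / B := by
  rw [HB, (summable_fract_pow_mul_div_pow hB x).tsum_eq_zero_add, HB, ← tsum_div_const]
  simp only [pow_zero, one_mul, div_one, pow_succ, mul_assoc, div_div]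

lemma sum_HB_le_of_fract_le (hB : 1 < B) {ι : Type*} [Fintype ι] (y : ι → ℝ) (x : ℝ)
    (h : ∀ m : ℕ, ∑ i, Int.fract ((B : ℝ) ^ m * y i) ≤ Int.fract ((B : ℝ) ^ m * x)) :
    ∑ i, HB B (y i) ≤ HB B x := by
  have hy := fun i (_ : i ∈ univ) => summable_fract_pow_mul_div_pow hB (y i)
  simp only [HB]
  rw [← Summable.tsum_finsetSum hy]
  refine (summable_sum hy).tsum_le_tsum (fun m => ?_) (summable_fract_pow_mul_div_pow hB x)
  rw [← Finset.sum_div]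
  gcongr
  exact h m

end HB

section HBPlusRemainder

variable {B : ℕ} {M : ℝ}

noncomputable def HBPlusRemainder (B : ℕ) (M : ℝ) (N : ℕ) (x : ℝ) : ℝ :=
  HB B x + M * Int.fract ((B : ℝ) ^ N * x) / (B : ℝ) ^ N

lemma HBPlusRemainder_nonneg (hM : 0 ≤ M) (N : ℕ) (x : ℝ) : 0 ≤ HBPlusRemainder B M N x :=
  add_nonneg (HB_nonneg x) (by have := Int.fract_nonneg ((B : ℝ) ^ N * x); positivity)

lemma HBPlusRemainder_zero (x : ℝ) : HBPlusRemainder B M 0 x = HB B x + M * Int.fract x := by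
  simp [HBPlusRemainder]

lemma HBPlusRemainder_succ (hB : 1 < B) (N : ℕ) (x : ℝ) :
    HBPlusRemainder B M (N + 1) x = Int.fract x + HBPlusRemainder B M N (B * x) / B := by
  have hB0 : (B : ℝ) ≠ 0 := by positivity
  rw [HBPlusRemainder, HBPlusRemainder, HB_eq_fract_add hB, pow_succ', mul_assoc]
  field_simp
  ring

lemma sum_HBPlusRemainder_le_of_fract_le (hB : 1 < B) (hM : 0 ≤ M) (N : ℕ) {ι : Type*}
    [Fintype ι] (y : ι → ℝ) (x : ℝ)
    (h : ∀ m : ℕ, ∑ i, Int.fract ((B : ℝ) ^ m * y i) ≤ Int.fract ((B : ℝ) ^ m * x)) :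
    ∑ i, HBPlusRemainder B M N (y i) ≤ HBPlusRemainder B M N x := by
  simp only [HBPlusRemainder, sum_add_distrib, ← sum_div, ← mul_sum]
  gcongr
  exacts [sum_HB_le_of_fract_le hB y x h, h N]

lemma HBPlusRemainder_le (hM : 0 ≤ M) (N : ℕ) (x : ℝ) :
    HBPlusRemainder B M N x ≤ HB B x + M / (B : ℝ) ^ N := by
  unfold HBPlusRemainder
  gcongr
  exact mul_le_of_le_one_right hM (Int.fract_lt_one _).le

end HBPlusRemainder

section Decomposition

variable {ι : Type*} [Fintype ι] {B : ℕ}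

lemma exists_le_le_sum_eq {L U : ι → ℕ} (hLU : L ≤ U) {t : ℕ} (hLt : ∑ k, L k ≤ t)
    (htU : t ≤ ∑ k, U k) : ∃ q, L ≤ q ∧ q ≤ U ∧ ∑ k, q k = t := by
  classical
  induction t, hLt using Nat.le_induction with
  | base => exact ⟨L, le_rfl, hLU, rfl⟩
  | succ t _ ih =>
    obtain ⟨q, hLq, hqU, hq⟩ := ih (by omega)
    obtain ⟨k, -, hk⟩ := exists_lt_of_sum_lt (hq ▸ htU : ∑ k, q k < ∑ k, U k)
    refine ⟨q + Pi.single k 1, hLq.trans le_self_add, fun j => ?_, ?_⟩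
    · rcases eq_or_ne j k with rfl | hj
      · simpa using hk
      · simpa [hj] using hqU j
    · simp [sum_add_distrib, hq]

lemma fract_pow_mul_le_of_floor_div_le (hB : 0 < B) {p : ℕ} {x y : ℝ}
    (hyx : (⌊(B : ℝ) ^ p * y⌋₊ : ℝ) / (B : ℝ) ^ p ≤ x) (hxy : x ≤ y) {j : ℕ} (hj : j ≤ p) :
    Int.fract ((B : ℝ) ^ j * x) ≤ Int.fract ((B : ℝ) ^ j * y) := by
  obtain ⟨d, rfl⟩ := Nat.exists_eq_add_of_le hj
  have hB' : (0 : ℝ) < B := mod_cast hB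
  have hy : 0 ≤ y := (div_nonneg (Nat.cast_nonneg _) (by positivity)).trans (hyx.trans hxy)
  set N := ⌊(B : ℝ) ^ j * y⌋₊
  refine Int.fract_le_fract_of_natCast_le (N := N) ?_ (by gcongr) (Nat.lt_floor_add_one _)
  have hN : N * B ^ d ≤ ⌊(B : ℝ) ^ (j + d) * y⌋₊ := Nat.le_floor <| by
    push_cast
    rw [pow_add, mul_right_comm]
    gcongr
    exact Nat.floor_le (by positivity)
  calc (N : ℝ) = N * (B : ℝ) ^ d / (B : ℝ) ^ (j + d) * (B : ℝ) ^ j := by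
        rw [pow_add]; field_simp
    _ ≤ ⌊(B : ℝ) ^ (j + d) * y⌋₊ / (B : ℝ) ^ (j + d) * (B : ℝ) ^ j := by
        gcongr; exact_mod_cast hN
    _ ≤ (B : ℝ) ^ j * x := by rw [mul_comm]; gcongr

lemma fract_pow_mul_natCast_div_pow (hB : B ≠ 0) (q : ℕ) {m j : ℕ} (hmj : m ≤ j) :
    Int.fract ((B : ℝ) ^ j * (q / (B : ℝ) ^ m)) = 0 := by
  obtain ⟨d, rfl⟩ := Nat.exists_eq_add_of_le hmj
  have : (B : ℝ) ^ (m + d) * (q / (B : ℝ) ^ m) = ((q * B ^ d : ℕ) : ℝ) := by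
    push_cast; rw [pow_add]; field_simp
  rw [this, Int.fract_natCast]

lemma exists_pow_le_sum_floor (hB : 1 < B) {f : ι → ℝ} (hf : 1 < ∑ k, f k) :
    ∃ m : ℕ, B ^ m ≤ ∑ k, ⌊(B : ℝ) ^ m * f k⌋₊ := by
  obtain ⟨m, hm⟩ := pow_unbounded_of_one_lt (Fintype.card ι / (∑ k, f k - 1))
    (mod_cast hB : (1 : ℝ) < B)
  rw [div_lt_iff₀ (by linarith)] at hm
  refine ⟨m, Nat.cast_le (α := ℝ) |>.1 ?_⟩
  push_cast
  calc (B : ℝ) ^ m ≤ (B : ℝ) ^ m * ∑ k, f k - Fintype.card ι := by linarith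
    _ = ∑ k, ((B : ℝ) ^ m * f k - 1) := by simp [sum_sub_distrib, mul_sum]
    _ ≤ ∑ k, (⌊(B : ℝ) ^ m * f k⌋₊ : ℝ) :=
        sum_le_sum fun k _ => by linarith [Nat.lt_floor_add_one ((B : ℝ) ^ m * f k)]

/-- Pick `m` minimal with `∑ ⌊Bᵐ fₖ⌋ ≥ Bᵐ` and take `g = q / Bᵐ`, where the integers `qₖ` agree
with `Bᵐ fₖ` in all base-`B` digits but the last one, which is lowered so that `∑ q = Bᵐ`. -/
lemma exists_mem_stdSimplex_le_fract_le_of_lt_one (hB : 1 < B) {f : ι → ℝ} (hf0 : 0 ≤ f)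
    (hf1 : ∀ k, f k < 1) (hsum : 1 < ∑ k, f k) :
    ∃ g ∈ stdSimplex ℝ ι, g ≤ f ∧
      ∀ k (j : ℕ), Int.fract ((B : ℝ) ^ j * g k) ≤ Int.fract ((B : ℝ) ^ j * f k) := by
  classical
  have hex := exists_pow_le_sum_floor hB hsum
  obtain ⟨p, hp⟩ : ∃ p, Nat.find hex = p + 1 := Nat.exists_eq_succ_of_ne_zero fun h0 => by
    simpa [h0, Nat.floor_eq_zero.2 (hf1 _)] using Nat.find_spec hex
  have hlow : ∑ k, ⌊(B : ℝ) ^ p * f k⌋₊ < B ^ p := not_le.1 (Nat.find_min hex (by omega))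
  have hup := hp ▸ Nat.find_spec hex
  obtain ⟨q, hLq, hqU, hq⟩ := exists_le_le_sum_eq (L := fun k => B * ⌊(B : ℝ) ^ p * f k⌋₊)
    (U := fun k => ⌊(B : ℝ) ^ (p + 1) * f k⌋₊) (t := B ^ (p + 1))
    (fun k => Nat.le_floor <| by
      push_cast
      rw [pow_succ', mul_assoc]
      gcongr
      exact Nat.floor_le (mul_nonneg (by positivity) (hf0 k)))
    (by rw [← mul_sum, pow_succ']; exact Nat.mul_le_mul_left B hlow.le) hup
  refine ⟨fun k => q k / (B : ℝ) ^ (p + 1), ⟨fun k => by positivity, ?_⟩, fun k => ?_,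
    fun k j => ?_⟩
  · rw [← sum_div, div_eq_one_iff_eq (by positivity)]
    exact_mod_cast hq
  · rw [div_le_iff₀ (by positivity), mul_comm]
    exact (Nat.cast_le.2 (hqU k)).trans (Nat.floor_le (mul_nonneg (by positivity) (hf0 k)))
  · rcases le_or_gt j p with hj | hj
    · refine fract_pow_mul_le_of_floor_div_le (by omega) ?_ ?_ hj
      · dsimp only
        rw [div_le_div_iff₀ (by positivity) (by positivity), pow_succ', ← mul_assoc,
          mul_comm _ (B : ℝ)]
        gcongr
        exact_mod_cast hLq k
      · rw [div_le_iff₀ (by positivity), mul_comm]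
        exact (Nat.cast_le.2 (hqU k)).trans (Nat.floor_le (mul_nonneg (by positivity) (hf0 k)))
    · rw [fract_pow_mul_natCast_div_pow (by omega) _ hj]
      exact Int.fract_nonneg _

lemma exists_mem_stdSimplex_le_fract_le (hB : 1 < B) {f : ι → ℝ} (hf0 : 0 ≤ f)
    (hsum : 1 ≤ ∑ k, f k) :
    ∃ g ∈ stdSimplex ℝ ι, g ≤ f ∧
      ∀ k (j : ℕ), Int.fract ((B : ℝ) ^ j * g k) ≤ Int.fract ((B : ℝ) ^ j * f k) := by
  classical
  by_cases hbig : ∃ k, 1 ≤ f k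
  · obtain ⟨k, hk⟩ := hbig
    refine ⟨Pi.single k 1, single_mem_stdSimplex ℝ k, fun i => ?_, fun i j => ?_⟩
    · rcases eq_or_ne i k with rfl | hi
      · simpa using hk
      · simpa [hi] using hf0 i
    · rcases eq_or_ne i k with rfl | hi
      · rw [Pi.single_eq_same, mul_one, ← Nat.cast_pow, Int.fract_natCast]
        exact Int.fract_nonneg _
      · rw [Pi.single_eq_of_ne hi, mul_zero, Int.fract_zero]
        exact Int.fract_nonneg _
  simp only [not_exists, not_le] at hbig
  rcases hsum.eq_or_lt with h1 | h1
  · exact ⟨f, ⟨hf0, h1.symm⟩, le_rfl, fun _ _ => le_rfl⟩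
  · exact exists_mem_stdSimplex_le_fract_le_of_lt_one hB hf0 hbig h1

theorem exists_stdSimplex_family_sum_eq (hB : 1 < B) (s : ℕ) {f : ι → ℝ} (hf0 : 0 ≤ f)
    (hfs : ∑ k, f k = s) :
    ∃ y : Fin s → ι → ℝ, (∀ i, y i ∈ stdSimplex ℝ ι) ∧ ∑ i, y i = f ∧
      ∀ k (m : ℕ), ∑ i, Int.fract ((B : ℝ) ^ m * y i k) ≤ Int.fract ((B : ℝ) ^ m * f k) := by
  induction s generalizing f with
  | zero =>
    obtain rfl : f = 0 := funext fun k =>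
      (sum_eq_zero_iff_of_nonneg fun k _ => hf0 k).1 (by simpa using hfs) k (mem_univ k)
    exact ⟨finZeroElim, finZeroElim, by simp, fun k m => by simp⟩
  | succ s ih =>
    obtain ⟨g, hg, hgf, hgfract⟩ := exists_mem_stdSimplex_le_fract_le hB hf0
      (by rw [hfs]; exact_mod_cast Nat.le_add_left 1 s)
    obtain ⟨y, hy, hysum, hyfract⟩ := ih (f := f - g) (sub_nonneg.2 hgf)
      (by simp [sum_sub_distrib, hfs, hg.2])
    refine ⟨Fin.cons g y, Fin.forall_fin_succ.2 ⟨by simpa using hg, by simpa using hy⟩,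
      by rw [Fin.sum_cons, hysum, add_sub_cancel], fun k m => ?_⟩
    calc ∑ i, Int.fract ((B : ℝ) ^ m * Fin.cons (α := fun _ => ι → ℝ) g y i k)
        = Int.fract ((B : ℝ) ^ m * g k) + ∑ i, Int.fract ((B : ℝ) ^ m * y i k) := by
          rw [Fin.sum_univ_succ]; simp
      _ ≤ Int.fract ((B : ℝ) ^ m * g k) + Int.fract ((B : ℝ) ^ m * (f - g) k) := by
          gcongr; exact hyfract k m
      _ = Int.fract ((B : ℝ) ^ m * f k) := by
          rw [Pi.sub_apply, mul_sub, Int.fract_sub_of_fract_le (hgfract k m)]; ring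

end Decomposition

def BaryAlmostConvexOn {E : Type*} [AddCommGroup E] [Module ℝ E] (B : ℕ) (C : Set E)
    (h : E → ℝ) : Prop :=
  ∀ y : Fin B → E, (∀ i, y i ∈ C) → h ((B : ℝ)⁻¹ • ∑ i, y i) ≤ 1 + (B : ℝ)⁻¹ * ∑ i, h (y i)

section Bound

open Filter Topology

variable {ι : Type*} [Fintype ι] [DecidableEq ι] {B : ℕ} {h : (ι → ℝ) → ℝ}

lemma eq_single_or_sum_fract_eq_one {z : ι → ℝ} (hz : z ∈ stdSimplex ℝ ι) :
    (∃ k, z = Pi.single k 1) ∨ ∑ k, Int.fract (z k) = 1 := by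
  by_cases h1 : ∀ k, z k < 1
  · right
    rw [← hz.2]
    exact sum_congr rfl fun k _ => Int.fract_eq_self.2 ⟨hz.1 k, h1 k⟩
  left
  obtain ⟨k, hk⟩ := not_forall.1 h1
  have hk1 : z k = 1 := le_antisymm (mem_Icc_of_mem_stdSimplex hz k).2 (not_lt.1 hk)
  have hrest : ∑ i ∈ univ.erase k, z i = 0 := by
    linarith [add_sum_erase univ z (mem_univ k), hz.2]
  refine ⟨k, funext fun j => ?_⟩
  rcases eq_or_ne j k with rfl | hj
  · simp [hk1]
  · rw [Pi.single_eq_of_ne hj]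
    exact (sum_eq_zero_iff_of_nonneg fun i _ => hz.1 i).1 hrest j (mem_erase.2 ⟨hj, mem_univ j⟩)

theorem le_sum_HBPlusRemainder (hB : 1 < B) (hac : BaryAlmostConvexOn B (stdSimplex ℝ ι) h)
    (hvert : ∀ k, h (Pi.single k 1) ≤ 0) {M : ℝ} (hM : 0 ≤ M)
    (hhM : ∀ z ∈ stdSimplex ℝ ι, h z ≤ M) (N : ℕ) :
    ∀ z ∈ stdSimplex ℝ ι, h z ≤ ∑ k, HBPlusRemainder B M N (z k) := by
  induction N with
  | zero =>
    intro z hz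
    rcases eq_single_or_sum_fract_eq_one hz with ⟨k, rfl⟩ | hfract
    · exact (hvert k).trans (sum_nonneg fun i _ => HBPlusRemainder_nonneg hM 0 _)
    · simp only [HBPlusRemainder_zero, sum_add_distrib, ← mul_sum, hfract, mul_one]
      linarith [hhM z hz, sum_nonneg fun k (_ : k ∈ univ) => HB_nonneg (B := B) (z k)]
  | succ N ih =>
    intro z hz
    rcases eq_single_or_sum_fract_eq_one hz with ⟨k, rfl⟩ | hfract
    · exact (hvert k).trans (sum_nonneg fun i _ => HBPlusRemainder_nonneg hM _ _)
    obtain ⟨y, hy, hysum, hyfract⟩ := exists_stdSimplex_family_sum_eq hB B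
      (f := (B : ℝ) • z) (smul_nonneg (Nat.cast_nonneg _) hz.1) (by simp [← mul_sum, hz.2])
    have hB0 : (B : ℝ) ≠ 0 := by positivity
    calc h z = h ((B : ℝ)⁻¹ • ∑ i, y i) := by rw [hysum, inv_smul_smul₀ hB0]
      _ ≤ 1 + (B : ℝ)⁻¹ * ∑ i, h (y i) := hac y hy
      _ ≤ 1 + (B : ℝ)⁻¹ * ∑ i, ∑ k, HBPlusRemainder B M N (y i k) := by
          gcongr with i; exact ih _ (hy i)
      _ = 1 + (B : ℝ)⁻¹ * ∑ k, ∑ i, HBPlusRemainder B M N (y i k) := by rw [sum_comm]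
      _ ≤ 1 + (B : ℝ)⁻¹ * ∑ k, HBPlusRemainder B M N (B * z k) := by
          gcongr with k
          exact sum_HBPlusRemainder_le_of_fract_le hB hM N _ _ (by simpa using hyfract k)
      _ = ∑ k, HBPlusRemainder B M (N + 1) (z k) := by
          simp only [HBPlusRemainder_succ hB, sum_add_distrib, hfract, mul_sum, div_eq_inv_mul]

theorem le_sum_HB (hB : 1 < B) (hac : BaryAlmostConvexOn B (stdSimplex ℝ ι) h)
    (hvert : ∀ k, h (Pi.single k 1) ≤ 0) (hbdd : ∃ M, ∀ z ∈ stdSimplex ℝ ι, h z ≤ M)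
    {x : ι → ℝ} (hx : x ∈ stdSimplex ℝ ι) : h x ≤ ∑ k, HB B (x k) := by
  obtain ⟨M, hM⟩ := hbdd
  set M₀ := max M 0
  have hM₀ : 0 ≤ M₀ := le_max_right _ _
  have hbound (N : ℕ) : h x ≤ ∑ k, HB B (x k) + Fintype.card ι * M₀ * (B : ℝ)⁻¹ ^ N :=
    calc h x ≤ ∑ k, HBPlusRemainder B M₀ N (x k) :=
          le_sum_HBPlusRemainder hB hac hvert hM₀ (fun z hz => (hM z hz).trans (le_max_left _ _))
            N x hx
      _ ≤ ∑ k, (HB B (x k) + M₀ / (B : ℝ) ^ N) :=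
          sum_le_sum fun k _ => HBPlusRemainder_le hM₀ N _
      _ = _ := by simp [sum_add_distrib, inv_pow, div_eq_mul_inv, mul_assoc]
  have hlim : Tendsto (fun N : ℕ => ∑ k, HB B (x k) + Fintype.card ι * M₀ * (B : ℝ)⁻¹ ^ N)
      atTop (𝓝 (∑ k, HB B (x k))) := by
    simpa using tendsto_const_nhds.add ((tendsto_pow_atTop_nhds_zero_of_lt_one (by positivity)
      (inv_lt_one_of_one_lt₀ (mod_cast hB))).const_mul (Fintype.card ι * M₀))
  exact ge_of_tendsto' hlim hbound

end Bound

theorem stmt4_general (B n : ℕ) (hB : 2 ≤ B)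
    (h : (Fin (n + 1) → ℝ) → ℝ)
    (hbdd : ∃ M : ℝ, ∀ x ∈ stdSimplex ℝ (Fin (n + 1)), |h x| ≤ M)
    (hac : ∀ y : Fin B → (Fin (n + 1) → ℝ),
      (∀ i, y i ∈ stdSimplex ℝ (Fin (n + 1))) →
      h (fun j => (∑ i, y i j) / (B : ℝ)) ≤ 1 + (1 / (B : ℝ)) * ∑ i, h (y i))
    (hvert : ∀ k : Fin (n + 1), h (fun j => if j = k then (1 : ℝ) else 0) ≤ 0) :
    ∀ x ∈ stdSimplex ℝ (Fin (n + 1)), h x ≤ ∑ k : Fin (n + 1), HB B (x k) := by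
  refine fun x hx => le_sum_HB hB (fun y hy => ?_) (fun k => ?_) ?_ hx
  · have hmean : (B : ℝ)⁻¹ • ∑ i, y i = fun j => (∑ i, y i j) / B := by
      ext j; simp [Finset.sum_apply, div_eq_inv_mul]
    rw [hmean, ← one_div]
    exact hac y hy
  · convert hvert k using 2
    ext j
    simp [Pi.single_apply]
  · obtain ⟨M, hM⟩ := hbdd
    exact ⟨M, fun z hz => (le_abs_self _).trans (hM z hz)⟩

theorem stmt4 (B n : ℕ) (hB : 2 ≤ B) (hn : 1 ≤ n)
    (h : (Fin (n + 1) → ℝ) → ℝ)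
    (hbdd : ∃ M : ℝ, ∀ x ∈ stdSimplex ℝ (Fin (n + 1)), |h x| ≤ M)
    (hac : ∀ y : Fin B → (Fin (n + 1) → ℝ),
      (∀ i, y i ∈ stdSimplex ℝ (Fin (n + 1))) →
      h (fun j => (∑ i, y i j) / (B : ℝ)) ≤ 1 + (1 / (B : ℝ)) * ∑ i, h (y i))
    (hvert : ∀ k : Fin (n + 1), h (fun j => if j = k then (1 : ℝ) else 0) ≤ 0) :
    ∀ x ∈ stdSimplex ℝ (Fin (n + 1)), h x ≤ ∑ k : Fin (n + 1), HB B (x k) :=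
  stmt4_general B n hB h hbdd hac hvert
end

section
/- Let B ≥ 2 be an integer, let U be a convex subset of a real normed vector space, and let h : U → ℝ be barycentrically B-almost convex and bounded above on every compact subset of U. Then for every n ≥ 1, all points x_0,…,x_n ∈ U, and every (t_0,…,t_n) ∈ Δ_n, h(t_0 x_0 + ⋯ + t_n x_n) ≤ ∑_{i=0}^n H_B(t_i) + ∑_{i=0}^n t_i h(x_i), and in particular h(t_0 x_0 + ⋯ + t_n x_n) ≤ κ_B(n) + ∑_{i=0}^n t_i h(x_i). -/
/-!
For weights `aᵢ ∈ ℕ` with `∑ aᵢ = B ^ m`, induction on `m` gives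
`h (B⁻ᵐ ∑ aᵢ xᵢ) ≤ B⁻ᵐ ∑ (sumModPow B m aᵢ + aᵢ h xᵢ)`. While some residues `aᵢ mod B` are
nonzero, `B` units taken from them are merged, by almost convexity at a cost of `1`, into one
new point of weight `B`; this lowers every `aᵢ mod Bˡ` by exactly the amount merged, which pays
for the merge. Once every `aᵢ` is divisible by `B`, dividing by `B` descends to `m - 1`.

With `aᵢ = ⌊Bᵐ tᵢ⌋` the cost is at most `∑ H_B(tᵢ)`. Since `h` need not be continuous, the
combination has to be `∑ tᵢ xᵢ` exactly: the mass lost in rounding (at most `(n + 1) / Bᵐ`) is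
placed on a point of the convex hull of the `xᵢ`, where `h` is bounded above. The error is
`O(m / Bᵐ)`, and `m → ∞` gives the first bound. The second holds because
`∑ᵢ {Bᵏ tᵢ} ≤ min (Bᵏ, n)`, the sum being an integer smaller than `n + 1`.
-/

open scoped BigOperators

/-- `κ_B(n) = ⌊log_B n⌋ + 1 + n/((B−1)·B^⌊log_B n⌋)`. -/
noncomputable def kappa (B n : ℕ) : ℝ :=
  (⌊Real.logb B n⌋ : ℝ) + 1 +
    (n : ℝ) / (((B : ℝ) - 1) * (B : ℝ) ^ ⌊Real.logb B n⌋)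

open Finset

/-- `sumModPow B m a / B ^ m` is the partial sum `∑_{k<m} {Bᵏ t} / Bᵏ` of `HB B t` at
`t = a / B ^ m`. -/
def sumModPow (B m a : ℕ) : ℕ := ∑ k ∈ range m, a % B ^ (m - k)

lemma Nat.sub_mod_add_of_le_mod {B N a c : ℕ} (hBN : B ∣ N) (hN : 0 < N) (hc : c ≤ a % B) :
    (a - c) % N + c = a % N := by
  have hle : a % B ≤ a % N := by
    rw [← Nat.mod_mod_of_dvd a hBN]
    exact Nat.mod_le _ _
  have hdiv := Nat.div_add_mod a N
  have hlt := Nat.mod_lt a hN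
  rw [show a - c = (a % N - c) + N * (a / N) by omega, Nat.add_mul_mod_self_left,
    Nat.mod_eq_of_lt (by omega)]
  omega

lemma sumModPow_le (B m a : ℕ) : sumModPow B m a ≤ m * a := by
  simpa [sumModPow] using sum_le_sum fun k (_ : k ∈ range m) => Nat.mod_le a (B ^ (m - k))

lemma sumModPow_succ_self_le (B m : ℕ) : sumModPow B (m + 1) B ≤ m * B := by
  rw [sumModPow, sum_range_succ, Nat.add_sub_cancel_left, pow_one, Nat.mod_self, add_zero]
  simpa using sum_le_sum fun k (_ : k ∈ range m) => Nat.mod_le B (B ^ (m + 1 - k))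

lemma sumModPow_succ_mul_self (B m q : ℕ) :
    sumModPow B (m + 1) (B * q) = B * sumModPow B m q := by
  rw [sumModPow, sum_range_succ, Nat.add_sub_cancel_left, pow_one, Nat.mul_mod_right, add_zero,
    sumModPow, mul_sum]
  refine sum_congr rfl fun k hk => ?_
  rw [show m + 1 - k = (m - k) + 1 by have := mem_range.1 hk; omega, pow_succ',
    Nat.mul_mod_mul_left]

lemma sumModPow_sub_add_mul {B m a c : ℕ} (hB : 0 < B) (hc : c ≤ a % B) :
    sumModPow B m (a - c) + m * c = sumModPow B m a := by
  have hm : m * c = ∑ _k ∈ range m, c := by simp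
  rw [sumModPow, sumModPow, hm, ← sum_add_distrib]
  refine sum_congr rfl fun k hk => Nat.sub_mod_add_of_le_mod ?_ (by positivity) hc
  exact dvd_pow_self B (by have := mem_range.1 hk; omega)

lemma summable_HB {B : ℕ} (hB : 1 < B) (t : ℝ) :
    Summable fun k : ℕ => Int.fract ((B : ℝ) ^ k * t) / (B : ℝ) ^ k := by
  have hB' : (1 : ℝ) < B := by exact_mod_cast hB
  refine Summable.of_nonneg_of_le (fun k => by positivity) (fun k => ?_)
    (summable_geometric_of_lt_one (by positivity) (inv_lt_one_of_one_lt₀ hB'))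
  rw [inv_pow, ← one_div]
  exact div_le_div_of_nonneg_right (Int.fract_lt_one _).le (by positivity)

lemma Int.fract_natFloor_div_le {u : ℝ} (hu : 0 ≤ u) (N : ℕ) :
    Int.fract ((⌊u⌋₊ : ℝ) / N) ≤ Int.fract (u / N) := by
  have hfloor : ⌊(⌊u⌋₊ : ℝ) / N⌋₊ = ⌊u / N⌋₊ := by
    rw [Nat.floor_div_eq_div, Nat.floor_div_natCast]
  rw [Int.fract, Int.fract, ← natCast_floor_eq_intCast_floor (by positivity),
    ← natCast_floor_eq_intCast_floor (by positivity), hfloor, sub_le_sub_iff_right]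
  gcongr
  exact Nat.floor_le hu

lemma sumModPow_floor_div_le_HB {B : ℕ} (hB : 1 < B) {t : ℝ} (ht : 0 ≤ t) (m : ℕ) :
    (sumModPow B m ⌊(B : ℝ) ^ m * t⌋₊ : ℝ) / (B : ℝ) ^ m ≤ HB B t := by
  have hterm : ∀ k ∈ range m, ((⌊(B : ℝ) ^ m * t⌋₊ % B ^ (m - k) : ℕ) : ℝ) / (B : ℝ) ^ m ≤
      Int.fract ((B : ℝ) ^ k * t) / (B : ℝ) ^ k := by
    intro k hk
    have hpow : (B : ℝ) ^ m = (B : ℝ) ^ (m - k) * (B : ℝ) ^ k := by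
      rw [← pow_add, Nat.sub_add_cancel (mem_range.1 hk).le]
    have hu : (B : ℝ) ^ k * t = (B : ℝ) ^ m * t / ((B ^ (m - k) : ℕ) : ℝ) := by
      push_cast
      rw [hpow]
      field_simp
    rw [hu, hpow, ← div_div, ← Nat.cast_pow B (m - k), ← Int.fract_div_natCast_eq_div_natCast_mod]
    gcongr
    exact Int.fract_natFloor_div_le (by positivity) _
  calc (sumModPow B m ⌊(B : ℝ) ^ m * t⌋₊ : ℝ) / (B : ℝ) ^ m
      = ∑ k ∈ range m, ((⌊(B : ℝ) ^ m * t⌋₊ % B ^ (m - k) : ℕ) : ℝ) / (B : ℝ) ^ m := by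
        rw [sumModPow, Nat.cast_sum, sum_div]
    _ ≤ ∑ k ∈ range m, Int.fract ((B : ℝ) ^ k * t) / (B : ℝ) ^ k := sum_le_sum hterm
    _ ≤ HB B t :=
        (summable_HB hB t).sum_le_tsum _ fun k _ => by positivity

section Simplex

variable {ι : Type*} [Fintype ι] {t : ι → ℝ}

lemma sum_fract_mul_le (ht : t ∈ stdSimplex ℝ ι) {N : ℝ} (hN : 0 ≤ N) :
    ∑ i, Int.fract (N * t i) ≤ N := by
  calc ∑ i, Int.fract (N * t i) ≤ ∑ i, N * t i := by
        gcongr with i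
        rw [← Int.self_sub_floor, sub_le_self_iff]
        exact_mod_cast Int.floor_nonneg.2 (mul_nonneg hN (ht.1 i))
    _ = N := by rw [← mul_sum, ht.2, mul_one]

lemma sum_fract_natCast_mul_le (ht : t ∈ stdSimplex ℝ ι) (N : ℕ) :
    ∑ i, Int.fract (N * t i) ≤ Fintype.card ι - 1 := by
  obtain ⟨i₀, -, -⟩ := exists_ne_zero_of_sum_ne_zero (ht.2.symm ▸ one_ne_zero : ∑ i, t i ≠ 0)
  set k : ℤ := N - ∑ i, ⌊(N : ℝ) * t i⌋
  have hk : ∑ i, Int.fract (N * t i) = k := by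
    simp only [Int.fract, sum_sub_distrib, ← mul_sum, ht.2, mul_one, k]
    push_cast
    rfl
  have hlt : (k : ℝ) < Fintype.card ι := by
    rw [← hk]
    calc ∑ i, Int.fract ((N : ℝ) * t i) < ∑ _i : ι, (1 : ℝ) :=
          sum_lt_sum_of_nonempty ⟨i₀, mem_univ _⟩ fun i _ => Int.fract_lt_one _
      _ = Fintype.card ι := by simp
  have hle : k ≤ Fintype.card ι - 1 := by
    have : k < Fintype.card ι := by exact_mod_cast hlt
    omega
  rw [hk]
  exact_mod_cast hle

lemma sum_HB_le {B : ℕ} (hB : 1 < B) (ht : t ∈ stdSimplex ℝ ι) (K : ℕ) :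
    ∑ i, HB B (t i) ≤ K + 1 + (Fintype.card ι - 1) / ((B - 1) * B ^ K) := by
  have hB' : (1 : ℝ) < B := by exact_mod_cast hB
  set c : ℝ := Fintype.card ι - 1
  set f : ℕ → ℝ := fun k => ∑ i, Int.fract ((B : ℝ) ^ k * t i) / (B : ℝ) ^ k
  have hf : Summable f := summable_sum fun i _ => summable_HB hB (t i)
  have hf_eq : ∀ k, f k = (∑ i, Int.fract ((B : ℝ) ^ k * t i)) / (B : ℝ) ^ k :=
    fun k => (sum_div ..).symm
  have hf_one : ∀ k, f k ≤ 1 := fun k => by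
    rw [hf_eq, div_le_one (by positivity)]
    exact sum_fract_mul_le ht (by positivity)
  have hf_geom : ∀ k, f (k + (K + 1)) ≤ c / B ^ (K + 1) * (B : ℝ)⁻¹ ^ k := fun k => by
    rw [hf_eq, inv_pow, ← div_eq_mul_inv, div_div, ← pow_add, add_comm (K + 1)]
    gcongr
    simpa using sum_fract_natCast_mul_le ht (B ^ (k + (K + 1)))
  have hgeom := summable_geometric_of_lt_one (by positivity) (inv_lt_one_of_one_lt₀ hB')
  calc ∑ i, HB B (t i) = ∑' k, f k := (Summable.tsum_finsetSum fun i _ => summable_HB hB (t i)).symm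
    _ = ∑ k ∈ range (K + 1), f k + ∑' k, f (k + (K + 1)) := (hf.sum_add_tsum_nat_add _).symm
    _ ≤ ∑ _k ∈ range (K + 1), 1 + ∑' k, c / B ^ (K + 1) * (B : ℝ)⁻¹ ^ k := by
        refine add_le_add (sum_le_sum fun k _ => hf_one k) ?_
        exact Summable.tsum_le_tsum hf_geom ((summable_nat_add_iff _).2 hf) (hgeom.mul_left _)
    _ = K + 1 + c / ((B - 1) * B ^ K) := by
        rw [tsum_mul_left, tsum_geometric_of_lt_one (by positivity) (inv_lt_one_of_one_lt₀ hB')]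
        have : (B : ℝ) - 1 ≠ 0 := by linarith
        simp only [sum_const, card_range, nsmul_eq_mul, mul_one, Nat.cast_add, Nat.cast_one]
        field_simp
        ring

lemma sum_natFloor_mul_le (ht : t ∈ stdSimplex ℝ ι) {N : ℝ} (hN : 0 ≤ N) :
    ∑ i, (⌊N * t i⌋₊ : ℝ) ≤ N :=
  calc ∑ i, (⌊N * t i⌋₊ : ℝ) ≤ ∑ i, N * t i :=
        sum_le_sum fun i _ => Nat.floor_le (mul_nonneg hN (ht.1 i))
    _ = N := by rw [← mul_sum, ht.2, mul_one]

lemma sub_card_le_sum_natFloor_mul (ht : t ∈ stdSimplex ℝ ι) (N : ℝ) :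
    N - Fintype.card ι ≤ ∑ i, (⌊N * t i⌋₊ : ℝ) :=
  calc N - Fintype.card ι = ∑ i, (N * t i - 1) := by simp [sum_sub_distrib, ← mul_sum, ht.2]
    _ ≤ ∑ i, (⌊N * t i⌋₊ : ℝ) := sum_le_sum fun i _ => (Nat.sub_one_lt_floor _).le

lemma sub_natFloor_mul_div_nonneg {N s : ℝ} (hN : 0 < N) (hs : 0 ≤ s) :
    0 ≤ s - ⌊N * s⌋₊ / N := by
  rw [sub_nonneg, div_le_iff₀ hN, mul_comm s]
  exact Nat.floor_le (mul_nonneg hN.le hs)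

lemma sub_natFloor_mul_div_le_inv {N : ℝ} (hN : 0 < N) (s : ℝ) :
    s - ⌊N * s⌋₊ / N ≤ N⁻¹ := by
  have := Nat.sub_one_lt_floor (N * s)
  rw [show s - ⌊N * s⌋₊ / N = (N * s - ⌊N * s⌋₊) / N by field_simp, ← one_div]
  exact div_le_div_of_nonneg_right (by linarith) hN.le

lemma sum_mul_add_sum_sub_mul_le {δ z : ι → ℝ} {y M ε : ℝ} (hδ0 : ∀ i, 0 ≤ δ i)
    (hδε : ∀ i, δ i ≤ ε) (hy : y ≤ M) (hz : ∀ i, z i ≤ M) :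
    (∑ i, δ i) * y + ∑ i, (t i - δ i) * z i ≤ ∑ i, t i * z i + ε * ∑ i, (M - z i) := by
  rw [sum_mul, ← sum_add_distrib, mul_sum, ← sum_add_distrib]
  refine sum_le_sum fun i _ => ?_
  have := mul_le_mul_of_nonneg_left (sub_le_sub_right hy (z i)) (hδ0 i)
  have := mul_le_mul_of_nonneg_right (hδε i) (sub_nonneg.2 (hz i))
  linarith

end Simplex

lemma sum_HB_le_kappa {B n : ℕ} (hB : 1 < B) {t : Fin (n + 1) → ℝ}
    (ht : t ∈ stdSimplex ℝ (Fin (n + 1))) : ∑ i, HB B (t i) ≤ kappa B n := by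
  rw [kappa, Real.floor_logb_natCast (Nat.cast_nonneg n), Int.log_natCast]
  simpa using sum_HB_le hB ht (Nat.log B n)

lemma Equiv.sum_comp_sigmaFin_fst {ι κ M : Type*} [Fintype ι] [Fintype κ] [AddCommMonoid M]
    {c : ι → ℕ} (e : (Σ i, Fin (c i)) ≃ κ) (f : ι → M) : ∑ j, f (e.symm j).1 = ∑ i, c i • f i := by
  rw [e.symm.sum_comp (fun σ => f σ.1), Fintype.sum_sigma]
  simp

lemma Finset.exists_le_sum_eq {ι : Type*} (s : Finset ι) (r : ι → ℕ) {k : ℕ}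
    (hk : k ≤ ∑ i ∈ s, r i) : ∃ c ≤ r, ∑ i ∈ s, c i = k := by
  classical
  induction s using Finset.induction_on generalizing k with
  | empty => exact ⟨0, fun _ => Nat.zero_le _, by simp_all⟩
  | insert j s hj ih =>
    rw [sum_insert hj] at hk
    obtain ⟨c, hcr, hcs⟩ := ih (k := k - min k (r j)) (by omega)
    refine ⟨Function.update c j (min k (r j)), fun i => ?_, ?_⟩
    · rcases eq_or_ne i j with rfl | hij
      · simp
      · simpa [hij] using hcr i
    · rw [sum_insert hj, Function.update_self, sum_update_of_notMem hj, hcs]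
      omega

lemma exists_mem_convexHull_sum_smul_eq {E ι : Type*} [AddCommGroup E] [Module ℝ E] [Fintype ι]
    [Nonempty ι] {δ : ι → ℝ} (hδ : ∀ i, 0 ≤ δ i) (x : ι → E) :
    ∃ w ∈ convexHull ℝ (Set.range x), ∑ i, δ i • x i = (∑ i, δ i) • w := by
  rcases (sum_nonneg fun i (_ : i ∈ univ) => hδ i).eq_or_lt with hzero | hpos
  · have hδ0 := (sum_eq_zero_iff_of_nonneg fun i _ => hδ i).1 hzero.symm
    refine ⟨x (Classical.arbitrary ι), subset_convexHull ℝ _ (Set.mem_range_self _), ?_⟩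
    simp [hδ0]
  · refine ⟨univ.centerMass δ x, univ.centerMass_mem_convexHull (fun i _ => hδ i) hpos
      fun i _ => Set.mem_range_self i, ?_⟩
    rw [centerMass, smul_inv_smul₀ hpos.ne']

lemma le_of_forall_le_add_div_pow {r u C a b : ℝ} (hr : 1 < r)
    (h : ∀ m : ℕ, u ≤ C + (m * a + b) / r ^ m) : u ≤ C := by
  have hlim : Filter.Tendsto (fun m : ℕ => C + (a * ((m : ℝ) ^ 1 / r ^ m) + b * (r⁻¹) ^ m))
      Filter.atTop (nhds (C + (a * 0 + b * 0))) :=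
    tendsto_const_nhds.add (((tendsto_pow_const_div_const_pow_of_one_lt 1 hr).const_mul a).add
      ((tendsto_pow_atTop_nhds_zero_of_lt_one (by positivity)
        (inv_lt_one_of_one_lt₀ hr)).const_mul b))
  refine ge_of_tendsto' (by simpa using hlim) fun m => (h m).trans_eq ?_
  ring

section AlmostConvex

variable {E : Type*} [AddCommGroup E] [Module ℝ E] {B : ℕ} {U : Set E} {h : E → ℝ}
  {ι : Type*} [Fintype ι]

def BarycentricallyAlmostConvexOn (B : ℕ) (U : Set E) (h : E → ℝ) : Prop :=
  ∀ y : Fin B → E, (∀ i, y i ∈ U) →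
    h ((B : ℝ)⁻¹ • ∑ i, y i) ≤ 1 + (1 / (B : ℝ)) * ∑ i, h (y i)

namespace BarycentricallyAlmostConvexOn

lemma apply_inv_smul_sum_le (hac : BarycentricallyAlmostConvexOn B U h) {x : ι → E}
    (hx : ∀ i, x i ∈ U) {c : ι → ℕ} (hc : ∑ i, c i = B) :
    h ((B : ℝ)⁻¹ • ∑ i, (c i : ℝ) • x i) ≤ 1 + (B : ℝ)⁻¹ * ∑ i, (c i : ℝ) * h (x i) := by
  let e : (Σ i, Fin (c i)) ≃ Fin B := Fintype.equivFinOfCardEq (by simp [hc])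
  have key := hac (fun j => x (e.symm j).1) fun j => hx _
  rw [Equiv.sum_comp_sigmaFin_fst e x, Equiv.sum_comp_sigmaFin_fst e fun i => h (x i)] at key
  simpa only [one_div, ← Nat.cast_smul_eq_nsmul ℝ, smul_eq_mul] using key

variable {m : ℕ} {x : ι → E}

lemma apply_le_of_sum_eq_one {a : ι → ℕ} (ha : ∑ i, a i = 1) :
    h (((B : ℝ) ^ 0)⁻¹ • ∑ i, (a i : ℝ) • x i) ≤
      ((B : ℝ) ^ 0)⁻¹ * ∑ i, ((sumModPow B 0 (a i) : ℝ) + a i * h (x i)) := by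
  classical
  obtain ⟨i₀, -, hi₀⟩ := exists_ne_zero_of_sum_ne_zero (ha.symm ▸ one_ne_zero : ∑ i, a i ≠ 0)
  have hzero : ∀ j ≠ i₀, a j = 0 := by
    have := add_sum_erase univ a (mem_univ i₀)
    intro j hj
    exact sum_eq_zero_iff.1 (by omega) j (mem_erase.2 ⟨hj, mem_univ j⟩)
  have hone : a i₀ = 1 := by
    rw [← ha, Fintype.sum_eq_single i₀ hzero]
  simp only [pow_zero, inv_one, one_smul, one_mul, sumModPow, range_zero, sum_empty,
    Nat.cast_zero, zero_add]
  rw [Fintype.sum_eq_single i₀ fun j hj => by simp [hzero j hj],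
    Fintype.sum_eq_single i₀ fun j hj => by simp [hzero j hj], hone]
  simp

lemma apply_le_of_mul_self (hB : 0 < B) {q : ι → ℕ}
    (hq : h (((B : ℝ) ^ m)⁻¹ • ∑ i, (q i : ℝ) • x i) ≤
      ((B : ℝ) ^ m)⁻¹ * ∑ i, ((sumModPow B m (q i) : ℝ) + q i * h (x i))) :
    h (((B : ℝ) ^ (m + 1))⁻¹ • ∑ i, ((B * q i : ℕ) : ℝ) • x i) ≤
      ((B : ℝ) ^ (m + 1))⁻¹ *
        ∑ i, ((sumModPow B (m + 1) (B * q i) : ℝ) + (B * q i : ℕ) * h (x i)) := by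
  have hB' : (B : ℝ) ≠ 0 := by positivity
  have hscale : ((B : ℝ) ^ (m + 1))⁻¹ * B = ((B : ℝ) ^ m)⁻¹ := by
    rw [pow_succ, mul_inv, inv_mul_cancel_right₀ hB']
  have hpt : ((B : ℝ) ^ (m + 1))⁻¹ • ∑ i, ((B * q i : ℕ) : ℝ) • x i =
      ((B : ℝ) ^ m)⁻¹ • ∑ i, (q i : ℝ) • x i := by
    simp only [← hscale, mul_smul, smul_sum, Nat.cast_mul]
  have hrhs : ((B : ℝ) ^ (m + 1))⁻¹ *
      ∑ i, ((sumModPow B (m + 1) (B * q i) : ℝ) + (B * q i : ℕ) * h (x i)) =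
      ((B : ℝ) ^ m)⁻¹ * ∑ i, ((sumModPow B m (q i) : ℝ) + q i * h (x i)) := by
    simp only [← hscale, mul_assoc, mul_sum, sumModPow_succ_mul_self, Nat.cast_mul, mul_add]
  rw [hpt, hrhs]
  exact hq

lemma apply_le_of_merge (hac : BarycentricallyAlmostConvexOn B U h) (hx : ∀ i, x i ∈ U)
    {a c : ι → ℕ} (hB : 0 < B) (hc : ∀ i, c i ≤ a i % B) (hcB : ∑ i, c i = B)
    (hmerged :
      let x' : Option ι → E := fun o => o.elim ((B : ℝ)⁻¹ • ∑ i, (c i : ℝ) • x i) x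
      let a' : Option ι → ℕ := fun o => o.elim B fun i => a i - c i
      h (((B : ℝ) ^ (m + 1))⁻¹ • ∑ o, (a' o : ℝ) • x' o) ≤
        ((B : ℝ) ^ (m + 1))⁻¹ * ∑ o, ((sumModPow B (m + 1) (a' o) : ℝ) + a' o * h (x' o))) :
    h (((B : ℝ) ^ (m + 1))⁻¹ • ∑ i, (a i : ℝ) • x i) ≤
      ((B : ℝ) ^ (m + 1))⁻¹ * ∑ i, ((sumModPow B (m + 1) (a i) : ℝ) + a i * h (x i)) := by
  have hB' : (B : ℝ) ≠ 0 := by positivity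
  have hca : ∀ i, c i ≤ a i := fun i => (hc i).trans (Nat.mod_le _ _)
  have hy := hac.apply_inv_smul_sum_le hx hcB
  have hG : ∀ i,
      (sumModPow B (m + 1) (a i - c i) : ℝ) + (m + 1) * c i = sumModPow B (m + 1) (a i) :=
    fun i => by exact_mod_cast sumModPow_sub_add_mul hB (hc i)
  have hGB : (sumModPow B (m + 1) B : ℝ) ≤ m * B := by exact_mod_cast sumModPow_succ_self_le B m
  have hcB' : ∑ i, (c i : ℝ) = B := by exact_mod_cast hcB
  simp only [Fintype.sum_option, Option.elim_none, Option.elim_some, Nat.cast_sub (hca _),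
    sub_smul, sub_mul, sum_sub_distrib, smul_smul, mul_inv_cancel₀ hB', one_smul,
    add_sub_cancel, sum_add_distrib] at hmerged
  refine hmerged.trans (mul_le_mul_of_nonneg_left ?_ (by positivity))
  have hGsum := congrArg (fun f => ∑ i, f i) (funext hG)
  simp only [sum_add_distrib, ← mul_sum, hcB'] at hGsum
  have hBy : (B : ℝ) * h ((B : ℝ)⁻¹ • ∑ i, (c i : ℝ) • x i) ≤ B + ∑ i, (c i : ℝ) * h (x i) := by
    have := mul_le_mul_of_nonneg_left hy (Nat.cast_nonneg B)
    rwa [mul_add, mul_one, ← mul_assoc, mul_inv_cancel₀ hB', one_mul] at this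
  rw [sum_add_distrib]
  linarith

theorem apply_inv_pow_smul_sum_le (hac : BarycentricallyAlmostConvexOn B U h) (hU : Convex ℝ U)
    (hB : 0 < B) (m : ℕ) {ι : Type*} [Fintype ι] {x : ι → E} (hx : ∀ i, x i ∈ U) {a : ι → ℕ}
    (ha : ∑ i, a i = B ^ m) :
    h (((B : ℝ) ^ m)⁻¹ • ∑ i, (a i : ℝ) • x i) ≤
      ((B : ℝ) ^ m)⁻¹ * ∑ i, ((sumModPow B m (a i) : ℝ) + a i * h (x i)) := by
  induction m generalizing ι with
  | zero => exact apply_le_of_sum_eq_one (by simpa using ha)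
  | succ m ih =>
    obtain ⟨s, hs⟩ : B ∣ ∑ i, a i % B := by
      rw [Nat.dvd_iff_mod_eq_zero, ← sum_nat_mod, ha, pow_succ, Nat.mul_mod_left]
    induction s generalizing ι with
    | zero =>
      have hdvd : ∀ i, B ∣ a i := fun i => Nat.dvd_of_mod_eq_zero (by simp_all)
      choose q hq using hdvd
      simp only [hq] at ha ⊢
      refine apply_le_of_mul_self hB (ih hx ?_)
      rw [← mul_sum, pow_succ'] at ha
      exact Nat.eq_of_mul_eq_mul_left hB ha
    | succ s ihs =>
      obtain ⟨c, hc, hcB⟩ :=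
        exists_le_sum_eq univ (fun i => a i % B) (k := B) (by rw [hs]; nlinarith)
      have hca : ∀ i, c i ≤ a i := fun i => (hc i).trans (Nat.mod_le _ _)
      refine apply_le_of_merge hac hx hB hc hcB (ihs (fun o => ?_) ?_ ?_)
      · cases o with
        | none =>
          have := hU.centerMass_mem (t := univ) (w := fun i => (c i : ℝ)) (z := x)
            (fun i _ => by positivity) (by rw [← Nat.cast_sum, hcB]; positivity) fun i _ => hx i
          rwa [Finset.centerMass, ← Nat.cast_sum, hcB] at this
        | some i => exact hx i
      · rw [Fintype.sum_option, ← ha, Option.elim_none, ← hcB, ← sum_add_distrib]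
        exact sum_congr rfl fun i _ => by simp [hca i]
      · have hmod : ∀ i, (a i - c i) % B + c i = a i % B := fun i =>
          Nat.sub_mod_add_of_le_mod dvd_rfl hB (hc i)
        have := congrArg (fun f => ∑ i, f i) (funext hmod)
        simp only [sum_add_distrib, hcB, hs] at this
        simp only [Fintype.sum_option, Option.elim_none, Option.elim_some, Nat.mod_self, zero_add]
        linarith

theorem apply_inv_pow_smul_add_sum_le (hac : BarycentricallyAlmostConvexOn B U h)
    (hU : Convex ℝ U) (hB : 0 < B) {x : ι → E} (hx : ∀ i, x i ∈ U) {w : E} (hw : w ∈ U)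
    {a : ι → ℕ} {ρ : ℕ} (hρa : ∑ i, a i + ρ = B ^ m) :
    h (((B : ℝ) ^ m)⁻¹ • ((ρ : ℝ) • w + ∑ i, (a i : ℝ) • x i)) ≤ ((B : ℝ) ^ m)⁻¹ *
      ((sumModPow B m ρ : ℝ) + ρ * h w + ∑ i, ((sumModPow B m (a i) : ℝ) + a i * h (x i))) := by
  simpa only [Fintype.sum_option, Option.elim_none, Option.elim_some] using
    hac.apply_inv_pow_smul_sum_le hU hB m (x := fun o : Option ι => o.elim w x)
      (a := fun o : Option ι => o.elim ρ a) (fun o => o.rec hw hx)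
      (by rw [Fintype.sum_option, add_comm]; exact hρa)

theorem apply_sum_smul_le_add_div_pow (hac : BarycentricallyAlmostConvexOn B U h)
    (hU : Convex ℝ U) (hB : 1 < B) {x : ι → E} (hx : ∀ i, x i ∈ U) {M : ℝ}
    (hM : ∀ y ∈ convexHull ℝ (Set.range x), h y ≤ M) {t : ι → ℝ} (ht : t ∈ stdSimplex ℝ ι)
    (m : ℕ) :
    h (∑ i, t i • x i) ≤ ∑ i, HB B (t i) + ∑ i, t i * h (x i) +
      (m * Fintype.card ι + ∑ i, (M - h (x i))) / (B : ℝ) ^ m := by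
  obtain ⟨i₀, -, -⟩ := exists_ne_zero_of_sum_ne_zero (ht.2.symm ▸ one_ne_zero : ∑ i, t i ≠ 0)
  have : Nonempty ι := ⟨i₀⟩
  set N : ℝ := (B : ℝ) ^ m
  have hN : 0 < N := by positivity
  set a : ι → ℕ := fun i => ⌊N * t i⌋₊
  set δ : ι → ℝ := fun i => t i - a i / N
  have hδ0 : ∀ i, 0 ≤ δ i := fun i => sub_natFloor_mul_div_nonneg hN (ht.1 i)
  have ha_le : ∑ i, a i ≤ B ^ m := by
    have : ((∑ i, a i : ℕ) : ℝ) ≤ (B ^ m : ℕ) := by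
      push_cast
      exact sum_natFloor_mul_le ht hN.le
    exact_mod_cast this
  set ρ : ℕ := B ^ m - ∑ i, a i
  have hρ_cast : (ρ : ℝ) = N - ∑ i, (a i : ℝ) := by
    rw [Nat.cast_sub ha_le, Nat.cast_sum, Nat.cast_pow]
  have hρ : (ρ : ℝ) = N * ∑ i, δ i := by
    rw [hρ_cast, sum_sub_distrib, ht.2, ← sum_div, mul_sub, mul_one, mul_div_cancel₀ _ hN.ne']
  obtain ⟨w, hwK, hw⟩ := exists_mem_convexHull_sum_smul_eq hδ0 x
  have hd := hac.apply_inv_pow_smul_add_sum_le hU (by omega) hx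
    (convexHull_min (Set.range_subset_iff.2 hx) hU hwK) (Nat.add_sub_cancel' ha_le)
  have hpoint : N⁻¹ • ((ρ : ℝ) • w + ∑ i, (a i : ℝ) • x i) = ∑ i, t i • x i := by
    rw [hρ, smul_add, smul_smul, inv_mul_cancel_left₀ hN.ne', ← hw, smul_sum, ← sum_add_distrib]
    refine sum_congr rfl fun i _ => ?_
    rw [smul_smul, ← add_smul, inv_mul_eq_div, sub_add_cancel]
  have hGρ : (sumModPow B m ρ : ℝ) ≤ m * Fintype.card ι :=
    calc (sumModPow B m ρ : ℝ) ≤ m * ρ := by exact_mod_cast sumModPow_le B m ρ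
      _ ≤ m * Fintype.card ι := by
          have hcard : N - Fintype.card ι ≤ ∑ i, (a i : ℝ) := sub_card_le_sum_natFloor_mul ht N
          exact mul_le_mul_of_nonneg_left (by linarith) (Nat.cast_nonneg m)
  have hGa : N⁻¹ * ∑ i, (sumModPow B m (a i) : ℝ) ≤ ∑ i, HB B (t i) := by
    rw [mul_sum]
    gcongr with i
    rw [inv_mul_eq_div]
    exact sumModPow_floor_div_le_HB hB (ht.1 i) m
  have hh : N⁻¹ * (ρ * h w + ∑ i, a i * h (x i)) ≤
      ∑ i, t i * h (x i) + N⁻¹ * ∑ i, (M - h (x i)) := by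
    have ha : ∀ i, N⁻¹ * a i = t i - δ i := fun i => by simp only [δ]; ring
    convert sum_mul_add_sum_sub_mul_le hδ0 (sub_natFloor_mul_div_le_inv hN <| t ·) (hM w hwK)
      fun i => hM _ (subset_convexHull ℝ _ (Set.mem_range_self i)) using 1
    simp only [mul_add, mul_sum, hρ, ← mul_assoc, inv_mul_cancel₀ hN.ne', one_mul, ha]
  calc h (∑ i, t i • x i) ≤ _ := hpoint ▸ hd
    _ = N⁻¹ * sumModPow B m ρ + N⁻¹ * ∑ i, (sumModPow B m (a i) : ℝ) +
          N⁻¹ * (ρ * h w + ∑ i, a i * h (x i)) := by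
        rw [sum_add_distrib]
        ring
    _ ≤ _ := by
        have := mul_le_mul_of_nonneg_left hGρ (inv_nonneg.2 hN.le)
        rw [div_eq_inv_mul, mul_add]
        linarith

end BarycentricallyAlmostConvexOn

end AlmostConvex

theorem stmt7 (B : ℕ) (hB : 2 ≤ B)
    {E : Type*} [NormedAddCommGroup E] [NormedSpace ℝ E]
    (U : Set E) (hU : Convex ℝ U) (h : E → ℝ)
    (hbdd : ∀ K ⊆ U, IsCompact K → ∃ M : ℝ, ∀ x ∈ K, h x ≤ M)
    (hac : ∀ y : Fin B → E, (∀ i, y i ∈ U) →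
      h ((B : ℝ)⁻¹ • ∑ i, y i) ≤ 1 + (1 / (B : ℝ)) * ∑ i, h (y i)) :
    ∀ n : ℕ, 1 ≤ n → ∀ x : Fin (n + 1) → E, (∀ i, x i ∈ U) →
      ∀ t ∈ stdSimplex ℝ (Fin (n + 1)),
        h (∑ i, t i • x i) ≤
            (∑ i : Fin (n + 1), HB B (t i)) + ∑ i, t i * h (x i) ∧
          h (∑ i, t i • x i) ≤ kappa B n + ∑ i, t i * h (x i) := by
  intro n _ x hx t ht
  obtain ⟨M, hM⟩ := hbdd _ (convexHull_min (Set.range_subset_iff.2 hx) hU)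
    ((Set.finite_range x).isCompact_convexHull ℝ)
  have hHB : h (∑ i, t i • x i) ≤ ∑ i, HB B (t i) + ∑ i, t i * h (x i) :=
    le_of_forall_le_add_div_pow (by exact_mod_cast hB) fun m =>
      BarycentricallyAlmostConvexOn.apply_sum_smul_le_add_div_pow hac hU hB hx hM ht m
  exact ⟨hHB, hHB.trans (add_le_add_left (sum_HB_le_kappa hB ht) _)⟩
end
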